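/- arXiv:2107.09340 — 2 statements merged into one kernel-verified Lean document; each statement's English description precedes it below -/
import Mathlib

section
/- On Ω = (0,1) with s ∈ (1,∞) and α > 0, the function ū(x) = x^α belongs to L^s(Ω), and ū is an s-SD function if and only if α + 1/s < 1 (equivalently, |ū|^{-1} ∈ L^r(Ω) where r is the conjugate exponent of s). -/
open MeasureTheory Real Filter Topology Set
open scoped ENNReal

/-- The `L^s`-norm `(∫ |u|^s dμ)^(1/s)` as a real number. -/
noncomputable def Lnorm {X : Type*} [MeasurableSpace X] (μ : Measure X) (s : ℝ)
    (u : X → ℝ) : ℝ :=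
  (∫ x, |u x| ^ s ∂μ) ^ (1 / s)

/-- `ubar` is an order-`s` slowly decreasing (s-SD) function: for every sequence of
measurable subsets `Ωk k ⊆ {ubar ≠ 0}` with positive measures tending to `0`,
the quotients `μ(Ωk k) / ‖ubar‖_{s,Ωk k}` tend to `0`. -/
def IsSD {X : Type*} [MeasurableSpace X] (μ : Measure X) (s : ℝ) (ubar : X → ℝ) : Prop :=
  ∀ Ωk : ℕ → Set X, (∀ k, MeasurableSet (Ωk k)) →
    (∀ k, Ωk k ⊆ {x | ubar x ≠ 0}) → (∀ k, 0 < (μ (Ωk k)).toReal) →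
    Tendsto (fun k => (μ (Ωk k)).toReal) atTop (𝓝 0) →
    Tendsto (fun k => (μ (Ωk k)).toReal / Lnorm (μ.restrict (Ωk k)) s ubar) atTop (𝓝 0)

/-- `η` belongs to the Fréchet subdifferential of `q` at `ubar` (with respect to the
`L^s(μ)`-norm): the liminf of the difference quotients is nonnegative, stated in
ε-δ form. -/
def InFSub {X : Type*} [MeasurableSpace X] (μ : Measure X) (s : ℝ)
    (q : (X → ℝ) → ℝ) (ubar η : X → ℝ) : Prop :=
  ∀ ε > 0, ∃ δ > 0, ∀ h : X → ℝ, MemLp h (ENNReal.ofReal s) μ →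
    0 < Lnorm μ s h → Lnorm μ s h ≤ δ →
    q (fun x => ubar x + h x) - q ubar - ∫ x, η x * h x ∂μ ≥ -ε * Lnorm μ s h

/-!
Write `p = α s`. For a measurable `A ⊆ (0,1)` of measure `m`, the bathtub principle for the
increasing function `x ↦ x ^ p` gives `∫_A x ^ p ≥ ∫_0^m x ^ p = m ^ (p + 1) / (p + 1)`,
hence `m / ‖x ^ α‖_{s,A} ≤ (α s + 1) ^ (1/s) * m ^ (1 - α - 1/s)`, with equality for
`A = (0,m)`. So the quotients tend to `0` along every admissible sequence when `α + 1/s < 1`,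
and stay above `(α s + 1) ^ (1/s)` along `(0, 1/(k+1))` otherwise.
-/

theorem Lnorm_nonneg {X : Type*} [MeasurableSpace X] (μ : Measure X) (s : ℝ) (u : X → ℝ) :
    0 ≤ Lnorm μ s u :=
  rpow_nonneg (integral_nonneg fun _ => rpow_nonneg (abs_nonneg _) s) _

theorem Lnorm_rpow {μ : Measure ℝ} (hμ : ∀ᵐ x ∂μ, 0 ≤ x) (s α : ℝ) :
    Lnorm μ s (fun x => x ^ α) = (∫ x, x ^ (α * s) ∂μ) ^ (1 / s) := by
  unfold Lnorm
  congr 1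
  refine integral_congr_ae (hμ.mono fun x hx => ?_)
  dsimp only
  rw [abs_of_nonneg (rpow_nonneg hx α), ← rpow_mul hx]

theorem integral_Ico_zero_rpow {p t : ℝ} (hp : -1 < p) (ht : 0 ≤ t) :
    ∫ x in Ico 0 t, x ^ p = t ^ (p + 1) / (p + 1) := by
  rw [integral_Ico_eq_integral_Ioo, ← integral_Ioc_eq_integral_Ioo,
    ← intervalIntegral.integral_of_le ht, integral_rpow (Or.inl hp),
    zero_rpow (by linarith), sub_zero]

theorem setIntegral_Ico_le_of_monotoneOn {f : ℝ → ℝ} {a : ℝ} {A : Set ℝ}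
    (hf : MonotoneOn f (Ici a)) (hA : MeasurableSet A) (hAa : A ⊆ Ici a)
    (hA_fin : volume A ≠ ∞) (hfA : IntegrableOn f A)
    (hfI : IntegrableOn f (Ico a (a + volume.real A))) :
    ∫ x in Ico a (a + volume.real A), f x ≤ ∫ x in A, f x := by
  set b := a + volume.real A
  set I := Ico a b
  have hb : b ∈ Ici a := le_add_of_nonneg_right measureReal_nonneg
  have hvol : volume A = volume I := by
    rw [Real.volume_Ico, add_sub_cancel_left, measureReal_def, ENNReal.ofReal_toReal hA_fin]
  have hdiff : volume.real (A \ I) = volume.real (I \ A) := by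
    rw [measureReal_def, measureReal_def, measure_sdiff_symm hA.nullMeasurableSet
      measurableSet_Ico.nullMeasurableSet hvol (measure_ne_top_of_subset inter_subset_left hA_fin)]
  have h_above : f b * volume.real (A \ I) ≤ ∫ x in A \ I, f x :=
    setIntegral_ge_of_const_le_real (hA.diff measurableSet_Ico)
      (measure_ne_top_of_subset sdiff_subset hA_fin)
      (fun x hx => hf hb (hAa hx.1) (not_lt.1 fun h => hx.2 ⟨hAa hx.1, h⟩))
      (hfA.mono_set sdiff_subset)
  have h_below : ∫ x in I \ A, f x ≤ f b * volume.real (I \ A) := by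
    calc ∫ x in I \ A, f x ≤ ∫ _ in I \ A, f b :=
          setIntegral_mono_on (hfI.mono_set sdiff_subset)
            (integrableOn_const (measure_ne_top_of_subset sdiff_subset (hvol ▸ hA_fin)))
            (measurableSet_Ico.diff hA) fun x hx => hf hx.1.1 hb hx.1.2.le
      _ = f b * volume.real (I \ A) := by rw [setIntegral_const, smul_eq_mul, mul_comm]
  have h_sdiff : ∫ x in I \ A, f x ≤ ∫ x in A \ I, f x := by
    rw [hdiff] at h_above
    linarith
  rw [← integral_inter_add_sdiff (t := I) measurableSet_Ico hfA,
    ← integral_inter_add_sdiff hA hfI, inter_comm I A]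
  exact add_le_add_right h_sdiff _

theorem measureReal_rpow_div_le_setIntegral_rpow {p b : ℝ} {A : Set ℝ} (hp : 0 ≤ p)
    (hA : MeasurableSet A) (hAb : A ⊆ Icc 0 b) :
    volume.real A ^ (p + 1) / (p + 1) ≤ ∫ x in A, x ^ p := by
  rw [← integral_Ico_zero_rpow (by linarith) measureReal_nonneg, ← zero_add (volume.real A)]
  have hint : ∀ c : ℝ, IntegrableOn (fun x : ℝ => x ^ p) (Icc 0 c) := fun _ =>
    (continuous_rpow_const hp).integrableOn_Icc
  exact setIntegral_Ico_le_of_monotoneOn (fun x hx y _ hxy => rpow_le_rpow hx hxy hp) hA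
    (hAb.trans Icc_subset_Ici_self) (measure_ne_top_of_subset hAb measure_Icc_lt_top.ne)
    ((hint b).mono_set hAb) ((hint _).mono_set Ico_subset_Icc_self)

theorem div_rpow_div_rpow_eq {t s α : ℝ} (ht : 0 < t) (hs : s ≠ 0) (hP : 0 < α * s + 1) :
    t / (t ^ (α * s + 1) / (α * s + 1)) ^ (1 / s) =
      (α * s + 1) ^ (1 / s) * t ^ (1 - α - 1 / s) := by
  rw [div_rpow (rpow_nonneg ht.le _) hP.le, ← rpow_mul ht.le, div_div_eq_mul_div, mul_comm,
    mul_div_assoc]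
  have hexp : 1 - α - 1 / s = 1 - (α * s + 1) * (1 / s) := by field_simp; ring
  rw [hexp, rpow_sub ht, rpow_one]

theorem measureReal_div_Lnorm_rpow_le {s α b : ℝ} {A : Set ℝ} (hs : 0 < s) (hα : 0 ≤ α)
    (hA : MeasurableSet A) (hAb : A ⊆ Icc 0 b) (hA_pos : 0 < volume.real A) :
    volume.real A / Lnorm (volume.restrict A) s (fun x => x ^ α) ≤
      (α * s + 1) ^ (1 / s) * volume.real A ^ (1 - α - 1 / s) := by
  have hP : 0 < α * s + 1 := by positivity
  have hαs : 0 ≤ α * s := by positivity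
  rw [← div_rpow_div_rpow_eq hA_pos hs.ne' hP,
    Lnorm_rpow ((ae_restrict_iff' hA).2 (ae_of_all _ fun x hx => (hAb hx).1))]
  exact div_le_div_of_nonneg_left hA_pos.le (by positivity) (rpow_le_rpow (by positivity)
    (measureReal_rpow_div_le_setIntegral_rpow hαs hA hAb) (by positivity))

theorem div_Lnorm_rpow_Ioo_zero {s α t : ℝ} (hs : 0 < s) (hα : 0 ≤ α) (ht : 0 < t) :
    t / Lnorm (volume.restrict (Ioo 0 t)) s (fun x => x ^ α) =
      (α * s + 1) ^ (1 / s) * t ^ (1 - α - 1 / s) := by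
  have hαs : 0 ≤ α * s := by positivity
  rw [← div_rpow_div_rpow_eq ht hs.ne' (by linarith),
    Lnorm_rpow ((ae_restrict_iff' measurableSet_Ioo).2 (ae_of_all _ fun x hx => hx.1.le)),
    ← integral_Ico_eq_integral_Ioo, integral_Ico_zero_rpow (by linarith) ht.le]

theorem memLp_rpow_Ioo_zero {α : ℝ} (hα : 0 ≤ α) (b : ℝ) (p : ℝ≥0∞) :
    MemLp (fun x : ℝ => x ^ α) p (volume.restrict (Ioo 0 b)) := by
  refine MemLp.of_bound (continuous_rpow_const hα).aestronglyMeasurable (b ^ α) ?_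
  filter_upwards [ae_restrict_mem measurableSet_Ioo] with x hx
  rw [norm_of_nonneg (rpow_nonneg hx.1.le α)]
  exact rpow_le_rpow hx.1.le hx.2.le hα

theorem isSD_rpow_of_add_inv_lt_one {s α : ℝ} (hs : 0 < s) (hα : 0 ≤ α)
    (h : α + 1 / s < 1) :
    IsSD (volume.restrict (Ioo 0 1)) s (fun x : ℝ => x ^ α) := by
  intro Ω hΩ _ hpos hlim
  simp only [Measure.restrict_restrict (hΩ _), Measure.restrict_apply (hΩ _),
    ← measureReal_def] at hpos hlim ⊢
  have hbound : Tendsto (fun k => (α * s + 1) ^ (1 / s) *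
      volume.real (Ω k ∩ Ioo 0 1) ^ (1 - α - 1 / s)) atTop (𝓝 0) := by
    simpa using (hlim.rpow_const_nhds_zero (p := 1 - α - 1 / s) (by linarith)).const_mul
      ((α * s + 1) ^ (1 / s))
  exact squeeze_zero (fun k => div_nonneg (hpos k).le (Lnorm_nonneg _ _ _))
    (fun k => measureReal_div_Lnorm_rpow_le hs hα ((hΩ k).inter measurableSet_Ioo)
      (inter_subset_right.trans Ioo_subset_Icc_self) (hpos k)) hbound

theorem add_inv_lt_one_of_isSD_rpow {s α : ℝ} (hs : 0 < s) (hα : 0 ≤ α)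
    (hSD : IsSD (volume.restrict (Ioo 0 1)) s (fun x : ℝ => x ^ α)) : α + 1 / s < 1 := by
  set t : ℕ → ℝ := fun k => 1 / (k + 1)
  have ht_pos : ∀ k, 0 < t k := fun k => Nat.one_div_pos_of_nat
  have ht_le : ∀ k, t k ≤ 1 := fun k => div_le_one_of_le₀ (by simp) (by positivity)
  have hΩ : ∀ k, Ioo 0 (t k) ∩ Ioo 0 1 = Ioo 0 (t k) := fun k =>
    inter_eq_left.2 (Ioo_subset_Ioo_right (ht_le k))
  have hμ : ∀ k, (volume.restrict (Ioo (0 : ℝ) 1) (Ioo 0 (t k))).toReal = t k := fun k => by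
    rw [Measure.restrict_apply measurableSet_Ioo, hΩ, ← measureReal_def,
      Real.volume_real_Ioo_of_le (ht_pos k).le, sub_zero]
  have hlim := hSD (fun k => Ioo 0 (t k)) (fun _ => measurableSet_Ioo)
    (fun _ x hx => (rpow_pos_of_pos hx.1 α).ne') (fun k => by rw [hμ]; exact ht_pos k)
    (by simpa only [hμ] using tendsto_one_div_add_atTop_nhds_zero_nat)
  simp only [hμ, Measure.restrict_restrict measurableSet_Ioo, hΩ,
    div_Lnorm_rpow_Ioo_zero hs hα (ht_pos _)] at hlim
  by_contra! hge
  have hC : 0 < (α * s + 1) ^ (1 / s) := by positivity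
  have := ge_of_tendsto' hlim fun k => le_mul_of_one_le_right hC.le
    (one_le_rpow_of_pos_of_le_one_of_nonpos (ht_pos k) (ht_le k) (by linarith))
  linarith

/-- On `Ω = (0,1)`, the function `x ↦ x^α` is in `L^s(Ω)` and is s-SD iff `α + 1/s < 1`. -/
theorem powFun_isSD_iff (s α : ℝ) (hs : 1 < s) (hα : 0 < α) :
    MemLp (fun x : ℝ => x ^ α) (ENNReal.ofReal s) (volume.restrict (Set.Ioo (0:ℝ) 1)) ∧
    (IsSD (volume.restrict (Set.Ioo (0:ℝ) 1)) s (fun x : ℝ => x ^ α) ↔ α + 1 / s < 1) :=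
  ⟨memLp_rpow_Ioo_zero hα.le 1 _,
    add_inv_lt_one_of_isSD_rpow (zero_lt_one.trans hs) hα.le,
    isSD_rpow_of_add_inv_lt_one (zero_lt_one.trans hs) hα.le⟩
end

section
/- Let Ω ⊂ ℝ^d be measurable with finite positive measure, s ∈ (1,∞) with conjugate exponent r, and q_{s,0}(u) = λ({u ≠ 0}). For every ū ∈ L^s(Ω), the limiting (Mordukhovich) subdifferential of q_{s,0} at ū equals {η ∈ L^r(Ω) : η = 0 a.e. on {ū ≠ 0}}. -/
open MeasureTheory Real Filter Topology Set
open scoped ENNReal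

/-- `η` belongs to the limiting (Mordukhovich) subdifferential of `q` at `ubar`:
there are `u_k → ubar` strongly in `L^s` with `q(u_k) → q(ubar)` and Fréchet subgradients
`η_k ∈ ∂̂q(u_k)` converging weakly to `η` in `L^r`. -/
def InLimSub {X : Type*} [MeasurableSpace X] (μ : Measure X) (s r : ℝ)
    (q : (X → ℝ) → ℝ) (ubar η : X → ℝ) : Prop :=
  ∃ (u : ℕ → X → ℝ) (ηs : ℕ → X → ℝ),
    (∀ k, MemLp (u k) (ENNReal.ofReal s) μ) ∧
    Tendsto (fun k => Lnorm μ s (fun x => u k x - ubar x)) atTop (𝓝 0) ∧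
    Tendsto (fun k => q (u k)) atTop (𝓝 (q ubar)) ∧
    (∀ k, MemLp (ηs k) (ENNReal.ofReal r) μ) ∧
    (∀ k, InFSub μ s q (u k) (ηs k)) ∧
    ∀ h : X → ℝ, MemLp h (ENNReal.ofReal s) μ →
      Tendsto (fun k => ∫ x, ηs k x * h x ∂μ) atTop (𝓝 (∫ x, η x * h x ∂μ))

/-- The functional `q_{s,0}` of the statement. -/
noncomputable def supportMeasure {X : Type*} [MeasurableSpace X] (μ : Measure X) (u : X → ℝ) :
    ℝ :=
  μ.real (Function.support u)

section Lnorm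

variable {X : Type*} [MeasurableSpace X] {μ : Measure X} {s r : ℝ}

lemma MeasureTheory.MemLp.integrable_abs_rpow (hs : 0 < s) {f : X → ℝ}
    (hf : MemLp f (ENNReal.ofReal s) μ) : Integrable (fun x => |f x| ^ s) μ := by
  simpa [Real.norm_eq_abs, ENNReal.toReal_ofReal hs.le] using
    hf.integrable_norm_rpow (by simpa using hs) ENNReal.ofReal_ne_top

lemma lnorm_rpow (hs : 0 < s) (u : X → ℝ) : Lnorm μ s u ^ s = ∫ x, |u x| ^ s ∂μ := by
  rw [Lnorm, ← rpow_mul (integral_nonneg fun _ => rpow_nonneg (abs_nonneg _) _), one_div,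
    inv_mul_cancel₀ hs.ne', rpow_one]

lemma lnorm_congr_ae {u v : X → ℝ} (h : u =ᵐ[μ] v) : Lnorm μ s u = Lnorm μ s v := by
  unfold Lnorm
  congr 1
  exact integral_congr_ae (h.mono fun x hx => by simp only [hx])

lemma lnorm_eq_toReal_eLpNorm (hs : 0 < s) {u : X → ℝ} (hu : MemLp u (ENNReal.ofReal s) μ) :
    Lnorm μ s u = (eLpNorm u (ENNReal.ofReal s) μ).toReal := by
  rw [hu.eLpNorm_eq_integral_rpow_norm (by simpa using hs) ENNReal.ofReal_ne_top,
    ENNReal.toReal_ofReal (rpow_nonneg (integral_nonneg fun _ => rpow_nonneg (norm_nonneg _) _) _)]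
  simp [Lnorm, ENNReal.toReal_ofReal hs.le, Real.norm_eq_abs, one_div]

lemma lnorm_const_mul (hs : 0 < s) (t : ℝ) (u : X → ℝ) :
    Lnorm μ s (fun x => t * u x) = |t| * Lnorm μ s u := by
  have habs : ∀ x, |t * u x| ^ s = |t| ^ s * |u x| ^ s := fun x => by
    rw [abs_mul, mul_rpow (abs_nonneg _) (abs_nonneg _)]
  simp only [Lnorm, habs, integral_const_mul]
  rw [mul_rpow (rpow_nonneg (abs_nonneg _) _)
      (integral_nonneg fun _ => rpow_nonneg (abs_nonneg _) _),
    ← rpow_mul (abs_nonneg _), mul_one_div_cancel hs.ne', rpow_one]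

lemma lnorm_indicator_one (hs : 0 < s) {S : Set X} (hS : MeasurableSet S) :
    Lnorm μ s (S.indicator 1) = μ.real S ^ (1 / s) := by
  have habs : (fun x => |S.indicator (1 : X → ℝ) x| ^ s) = S.indicator 1 := by
    ext x
    by_cases hx : x ∈ S <;> simp [hx, zero_rpow hs.ne']
  rw [Lnorm, habs, integral_indicator_one hS]

lemma lnorm_mono (hs : 0 < s) {f g : X → ℝ} (hg : MemLp g (ENNReal.ofReal s) μ)
    (hfg : ∀ x, |f x| ≤ |g x|) : Lnorm μ s f ≤ Lnorm μ s g :=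
  rpow_le_rpow (integral_nonneg fun _ => rpow_nonneg (abs_nonneg _) _)
    (integral_mono_of_nonneg (Eventually.of_forall fun _ => rpow_nonneg (abs_nonneg _) _)
      (hg.integrable_abs_rpow hs)
      (Eventually.of_forall fun x => rpow_le_rpow (abs_nonneg _) (hfg x) hs.le))
    (by positivity)

lemma abs_integral_mul_le_lnorm_mul_lnorm (hsr : s.HolderConjugate r) {η h : X → ℝ}
    (hη : MemLp η (ENNReal.ofReal r) μ) (hh : MemLp h (ENNReal.ofReal s) μ) :
    |∫ x, η x * h x ∂μ| ≤ Lnorm μ r η * Lnorm μ s h :=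
  calc |∫ x, η x * h x ∂μ| ≤ ∫ x, |η x| * |h x| ∂μ := by
        simpa only [Real.norm_eq_abs, abs_mul] using
          norm_integral_le_integral_norm (μ := μ) fun x => η x * h x
    _ ≤ Lnorm μ r η * Lnorm μ s h := by
        simpa only [Lnorm, Real.norm_eq_abs] using
          integral_mul_norm_le_Lp_mul_Lq hsr.symm hη hh

lemma mul_measureReal_le_lnorm_rpow (hs : 0 < s) {c : ℝ} (hc : 0 ≤ c) {f : X → ℝ}
    (hf : MemLp f (ENNReal.ofReal s) μ) :
    c ^ s * μ.real {x | c ≤ |f x|} ≤ Lnorm μ s f ^ s := by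
  have hset : {x | c ≤ |f x|} = {x | c ^ s ≤ |f x| ^ s} := by
    ext x
    exact (rpow_le_rpow_iff hc (abs_nonneg _) hs).symm
  rw [hset, lnorm_rpow hs]
  exact mul_meas_ge_le_integral_of_nonneg
    (Eventually.of_forall fun _ => rpow_nonneg (abs_nonneg _) _) (hf.integrable_abs_rpow hs) _

lemma tendsto_measureReal_le_abs_of_tendsto_lnorm {ι : Type*} {l : Filter ι} (hs : 0 < s)
    {c : ℝ} (hc : 0 < c) {f : ι → X → ℝ} (hf : ∀ k, MemLp (f k) (ENNReal.ofReal s) μ)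
    (hlim : Tendsto (fun k => Lnorm μ s (f k)) l (𝓝 0)) :
    Tendsto (fun k => μ.real {x | c ≤ |f k x|}) l (𝓝 0) := by
  have hcs : 0 < c ^ s := rpow_pos_of_pos hc s
  have hpow : Tendsto (fun k => Lnorm μ s (f k) ^ s / c ^ s) l (𝓝 0) := by
    simpa [zero_rpow hs.ne'] using (hlim.rpow_const (Or.inr hs.le)).div_const (c ^ s)
  refine squeeze_zero (fun _ => measureReal_nonneg) (fun k => ?_) hpow
  rw [le_div_iff₀ hcs, mul_comm]
  exact mul_measureReal_le_lnorm_rpow hs hc.le (hf k)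

lemma exists_lnorm_indicator_le [IsFiniteMeasure μ] (hr : 1 ≤ r) {η : X → ℝ}
    (hη : MemLp η (ENNReal.ofReal r) μ) {ε : ℝ} (hε : 0 < ε) :
    ∃ δ > 0, ∀ B, MeasurableSet B → μ.real B ≤ δ → Lnorm μ r (B.indicator η) ≤ ε := by
  obtain ⟨δ, hδ, hsmall⟩ :=
    hη.eLpNorm_indicator_le (ENNReal.one_le_ofReal.2 hr) ENNReal.ofReal_ne_top hε
  refine ⟨δ, hδ, fun B hB hμB => ?_⟩
  rw [lnorm_eq_toReal_eLpNorm (by linarith) (hη.indicator hB)]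
  exact ENNReal.toReal_le_of_le_ofReal hε.le
    (hsmall B hB ((ENNReal.le_ofReal_iff_toReal_le (measure_ne_top μ B) hδ.le).2 hμB))

/-- Banach–Steinhaus, applied to the functionals `h ↦ ∫ η_k h` on `Lˢ`. -/
lemma exists_abs_integral_mul_le_of_tendsto (hsr : s.HolderConjugate r) {ηs : ℕ → X → ℝ}
    (hηs : ∀ k, MemLp (ηs k) (ENNReal.ofReal r) μ)
    (hconv : ∀ h, MemLp h (ENNReal.ofReal s) μ →
      ∃ L, Tendsto (fun k => ∫ x, ηs k x * h x ∂μ) atTop (𝓝 L)) :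
    ∃ C, 0 ≤ C ∧ ∀ k h, MemLp h (ENNReal.ofReal s) μ →
      |∫ x, ηs k x * h x ∂μ| ≤ C * Lnorm μ s h := by
  have := hsr.symm.ennrealOfReal
  have : Fact (1 ≤ ENNReal.ofReal s) := ⟨ENNReal.one_le_ofReal.2 hsr.lt.le⟩
  have : Fact (1 ≤ ENNReal.ofReal r) := ⟨ENNReal.one_le_ofReal.2 hsr.symm.lt.le⟩
  let T : ℕ → Lp ℝ (ENNReal.ofReal s) μ →L[ℝ] ℝ := fun k =>
    (ContinuousLinearMap.mul ℝ ℝ).lpPairing μ (ENNReal.ofReal r) (ENNReal.ofReal s)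
      ((hηs k).toLp (ηs k))
  have hT : ∀ k h (hh : MemLp h (ENNReal.ofReal s) μ), T k (hh.toLp h) = ∫ x, ηs k x * h x ∂μ := by
    intro k h hh
    rw [ContinuousLinearMap.lpPairing_eq_integral]
    refine integral_congr_ae ?_
    filter_upwards [(hηs k).coeFn_toLp, hh.coeFn_toLp] with x h₁ h₂
    simp [h₁, h₂]
  obtain ⟨C, hC⟩ := banach_steinhaus (g := T) fun f => by
    obtain ⟨L, hL⟩ := hconv f (Lp.memLp f)
    obtain ⟨C, hC⟩ := hL.norm.bddAbove_range
    refine ⟨C, fun k => ?_⟩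
    have := hT k f (Lp.memLp f)
    rw [Lp.toLp_coeFn] at this
    rw [this]
    exact hC (mem_range_self k)
  refine ⟨max C 0, le_max_right _ _, fun k h hh => ?_⟩
  rw [← hT k h hh, lnorm_eq_toReal_eLpNorm hsr.pos hh, ← Lp.norm_toLp h hh, ← Real.norm_eq_abs]
  exact ((T k).le_opNorm _).trans
    (mul_le_mul_of_nonneg_right ((hC k).trans (le_max_left _ _)) (norm_nonneg _))

end Lnorm

section Truncation

variable {X : Type*} {u : X → ℝ}

def truncationSet (u : X → ℝ) (k : ℕ) : Set X := {x | 1 / ((k : ℝ) + 1) ≤ |u x|}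

noncomputable def truncation (u : X → ℝ) (k : ℕ) : X → ℝ := (truncationSet u k).indicator u

lemma mem_truncationSet {k : ℕ} {x : X} : x ∈ truncationSet u k ↔ 1 / ((k : ℝ) + 1) ≤ |u x| :=
  Iff.rfl

lemma measurableSet_truncationSet [MeasurableSpace X] (hu : Measurable u) (k : ℕ) :
    MeasurableSet (truncationSet u k) :=
  measurableSet_le measurable_const hu.abs

lemma measurable_truncation [MeasurableSpace X] (hu : Measurable u) (k : ℕ) :
    Measurable (truncation u k) :=
  hu.indicator (measurableSet_truncationSet hu k)

lemma truncationSet_subset_support (k : ℕ) : truncationSet u k ⊆ Function.support u :=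
  fun x (hx : 1 / ((k : ℝ) + 1) ≤ |u x|) hux => by
    rw [hux, abs_zero] at hx
    exact (Nat.one_div_pos_of_nat.trans_le hx).false

lemma eventually_mem_truncationSet {x : X} (hx : u x ≠ 0) :
    ∀ᶠ k in atTop, x ∈ truncationSet u k :=
  (tendsto_one_div_add_atTop_nhds_zero_nat.eventually (gt_mem_nhds (abs_pos.2 hx))).mono
    fun _ hk => mem_truncationSet.2 hk.le

lemma monotone_truncationSet (u : X → ℝ) : Monotone (truncationSet u) := fun _ _ hkl _ hx =>
  mem_truncationSet.2 ((Nat.one_div_le_one_div hkl).trans (mem_truncationSet.1 hx))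

lemma iUnion_truncationSet (u : X → ℝ) : ⋃ k, truncationSet u k = Function.support u :=
  subset_antisymm (iUnion_subset truncationSet_subset_support) fun _ hx =>
    mem_iUnion.2 (eventually_mem_truncationSet hx).exists

lemma support_truncation (k : ℕ) : Function.support (truncation u k) = truncationSet u k := by
  rw [truncation, support_indicator, inter_eq_left.2 (truncationSet_subset_support k)]

lemma le_abs_truncation {k : ℕ} {x : X} (hx : truncation u k x ≠ 0) :
    1 / ((k : ℝ) + 1) ≤ |truncation u k x| := by
  have hxT := mem_of_indicator_ne_zero hx
  rw [truncation, indicator_of_mem hxT]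
  exact hxT

lemma abs_truncation_sub_le (k : ℕ) (x : X) : |truncation u k x - u x| ≤ |u x| := by
  by_cases hx : x ∈ truncationSet u k
  · rw [truncation, indicator_of_mem hx, sub_self, abs_zero]
    exact abs_nonneg _
  · rw [truncation, indicator_of_notMem hx, zero_sub, abs_neg]

lemma eventually_truncation_eq (u : X → ℝ) (x : X) : ∀ᶠ k in atTop, truncation u k x = u x := by
  by_cases hx : u x = 0
  · exact Eventually.of_forall fun _ => indicator_apply_eq_self.2 fun _ => hx
  · exact (eventually_mem_truncationSet hx).mono fun _ hk => indicator_of_mem hk u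

lemma support_add_const_mul_indicator {u : X → ℝ} {c t : ℝ} {S : Set X}
    (hSu : S ⊆ {x | c ≤ |u x|}) (ht : |t| < c) :
    Function.support (fun x => u x + t * S.indicator 1 x) = Function.support u := by
  ext x
  by_cases hx : x ∈ S
  · have hlt : |t| < |u x| := ht.trans_le (hSu hx)
    have hu0 : u x ≠ 0 := abs_pos.1 ((abs_nonneg t).trans_lt hlt)
    have hut : u x + t ≠ 0 := fun h0 => by
      rw [eq_neg_of_add_eq_zero_left h0, abs_neg] at hlt
      exact lt_irrefl _ hlt
    simp [hx, hu0, hut]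
  · simp [hx]

end Truncation

lemma eq_zero_of_forall_mul_le_abs {a : ℝ}
    (h : ∀ ε > 0, ∃ δ > 0, ∀ t : ℝ, t ≠ 0 → |t| ≤ δ → a * t ≤ ε * |t|) : a = 0 := by
  refine abs_eq_zero.1 (le_antisymm (le_of_forall_pos_le_add fun ε hε => ?_) (abs_nonneg a))
  obtain ⟨δ, hδ, hδt⟩ := h ε hε
  have h₁ := hδt δ hδ.ne' (abs_of_pos hδ).le
  have h₂ := hδt (-δ) (neg_ne_zero.2 hδ.ne') (by rw [abs_neg, abs_of_pos hδ])
  rw [abs_of_pos hδ] at h₁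
  rw [abs_neg, abs_of_pos hδ] at h₂
  rw [zero_add, abs_le]
  constructor <;> nlinarith

lemma exists_pos_rpow_div_le {s c ε δ : ℝ} (hs : 1 < s) (hc : 0 < c) (hε : 0 < ε) (hδ : 0 < δ)
    (M : ℝ) : ∃ τ > 0, ∀ t, 0 < t → t ≤ τ →
      t ^ s / c ^ s ≤ ε * t ∧ t ^ s / c ^ s + M * t ≤ δ := by
  have hcs : 0 < c ^ s := rpow_pos_of_pos hc s
  have h₁ : ∀ᶠ t in 𝓝 (0 : ℝ), t ^ (s - 1) < ε * c ^ s := by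
    have : Tendsto (fun t : ℝ => t ^ (s - 1)) (𝓝 0) (𝓝 0) := by
      simpa [zero_rpow (sub_pos.2 hs).ne'] using
        (continuousAt_rpow_const 0 (s - 1) (Or.inr (sub_pos.2 hs).le)).tendsto
    exact this.eventually (gt_mem_nhds (mul_pos hε hcs))
  have h₂ : ∀ᶠ t in 𝓝 (0 : ℝ), t ^ s / c ^ s + M * t < δ := by
    have : Tendsto (fun t : ℝ => t ^ s / c ^ s + M * t) (𝓝 0) (𝓝 0) := by
      simpa [zero_rpow (zero_lt_one.trans hs).ne'] using
        (((continuousAt_rpow_const 0 s (Or.inr (zero_lt_one.trans hs).le)).tendsto.div_const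
          (c ^ s)).add (tendsto_id.const_mul M))
    exact this.eventually (gt_mem_nhds hδ)
  obtain ⟨τ, hτ, hsub⟩ := mem_nhdsGT_iff_exists_Ioc_subset.1
    (nhdsWithin_le_nhds (h₁.and h₂))
  refine ⟨τ, hτ, fun t ht htτ => ?_⟩
  obtain ⟨hpow, hsum⟩ := hsub ⟨ht, htτ⟩
  refine ⟨?_, hsum.le⟩
  have hsplit : t ^ s = t ^ (s - 1) * t := by rw [rpow_sub_one ht.ne', div_mul_cancel₀ _ ht.ne']
  rw [div_le_iff₀ hcs, hsplit]
  nlinarith [mul_lt_mul_of_pos_right hpow ht]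

section Subdifferential

variable {X : Type*} [MeasurableSpace X] {μ : Measure X} {s r : ℝ}

lemma supportMeasure_congr_ae {u v : X → ℝ} (h : u =ᵐ[μ] v) :
    supportMeasure μ u = supportMeasure μ v :=
  measureReal_congr (eventuallyEq_set.2 (h.mono fun x hx => by simp [hx]))

lemma inFSub_supportMeasure_congr {u v η : X → ℝ} (h : u =ᵐ[μ] v) :
    InFSub μ s (supportMeasure μ) u η ↔ InFSub μ s (supportMeasure μ) v η := by
  have hadd : ∀ w : X → ℝ,
      supportMeasure μ (fun x => u x + w x) = supportMeasure μ (fun x => v x + w x) :=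
    fun w => supportMeasure_congr_ae (h.mono fun x hx => by simp only [hx])
  simp only [InFSub, hadd, supportMeasure_congr_ae h]

lemma inLimSub_supportMeasure_congr {ubar v η : X → ℝ} (h : ubar =ᵐ[μ] v) :
    InLimSub μ s r (supportMeasure μ) ubar η ↔ InLimSub μ s r (supportMeasure μ) v η := by
  have hsub : ∀ w : X → ℝ, Lnorm μ s (fun x => w x - ubar x) = Lnorm μ s (fun x => w x - v x) :=
    fun w => lnorm_congr_ae (h.mono fun x hx => by simp only [hx])
  simp only [InLimSub, hsub, supportMeasure_congr_ae h]

lemma supportMeasure_sub_add_le [IsFiniteMeasure μ] {u h : X → ℝ} (hu : Measurable u)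
    (hh : Measurable h) :
    supportMeasure μ u - μ.real {x | u x ≠ 0 ∧ u x + h x = 0} +
        μ.real {x | u x = 0 ∧ h x ≠ 0} ≤ supportMeasure μ (fun x => u x + h x) := by
  set lost := {x | u x ≠ 0 ∧ u x + h x = 0}
  set kept := {x | u x ≠ 0 ∧ u x + h x ≠ 0}
  set gained := {x | u x = 0 ∧ h x ≠ 0}
  have hgained : MeasurableSet gained :=
    (hu (measurableSet_singleton 0)).inter (hh (measurableSet_singleton 0)).compl
  have hsplit : Function.support u ⊆ kept ∪ lost := fun x hx => by
    by_cases hx' : u x + h x = 0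
    · exact Or.inr ⟨hx, hx'⟩
    · exact Or.inl ⟨hx, hx'⟩
  have hdisj : Disjoint kept gained := disjoint_left.2 fun x hx hx' => hx.1 hx'.1
  have hnew : kept ∪ gained ⊆ Function.support fun x => u x + h x := by
    rintro x (hx | hx)
    · exact hx.2
    · simpa [Function.mem_support, hx.1] using hx.2
  calc supportMeasure μ u - μ.real lost + μ.real gained
      ≤ μ.real kept + μ.real gained := by
        have := (measureReal_mono (μ := μ) hsplit).trans (measureReal_union_le kept lost)
        unfold supportMeasure
        linarith
    _ = μ.real (kept ∪ gained) := (measureReal_union hdisj hgained).symm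
    _ ≤ supportMeasure μ (fun x => u x + h x) := measureReal_mono hnew

/-- `B` is the part of the support gained by `u + h`; the part lost has measure at most
`‖h‖ˢ / cˢ`. -/
lemma exists_le_supportMeasure_add_sub [IsFiniteMeasure μ] (hsr : s.HolderConjugate r) {c : ℝ}
    (hc : 0 < c) {u η h : X → ℝ} (hu : Measurable u) (hlb : ∀ x, u x ≠ 0 → c ≤ |u x|)
    (hη : MemLp η (ENNReal.ofReal r) μ) (hvan : ∀ᵐ x ∂μ, u x ≠ 0 → η x = 0)
    (hh : MemLp h (ENNReal.ofReal s) μ) :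
    ∃ B, MeasurableSet B ∧
      μ.real B - Lnorm μ s h ^ s / c ^ s - Lnorm μ r (B.indicator η) * Lnorm μ s h ≤
        supportMeasure μ (fun x => u x + h x) - supportMeasure μ u - ∫ x, η x * h x ∂μ := by
  obtain ⟨h', hh'm, hh'⟩ := hh.1.aemeasurable
  set B := {x | u x = 0 ∧ h' x ≠ 0}
  have hB : MeasurableSet B :=
    (hu (measurableSet_singleton 0)).inter (hh'm (measurableSet_singleton 0)).compl
  refine ⟨B, hB, ?_⟩
  have hlost : μ.real {x | u x ≠ 0 ∧ u x + h' x = 0} ≤ Lnorm μ s h ^ s / c ^ s := by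
    rw [le_div_iff₀ (rpow_pos_of_pos hc s), mul_comm, lnorm_congr_ae hh']
    have hsub : {x | u x ≠ 0 ∧ u x + h' x = 0} ⊆ {x | c ≤ |h' x|} := fun x ⟨hx, hx'⟩ => by
      rw [mem_ofPred_eq, eq_neg_of_add_eq_zero_right hx', abs_neg]
      exact hlb x hx
    exact le_trans (mul_le_mul_of_nonneg_left (measureReal_mono hsub) (rpow_nonneg hc.le s))
      (mul_measureReal_le_lnorm_rpow hsr.pos hc.le (hh.ae_eq hh'))
  have hpair : ∫ x, η x * h x ∂μ = ∫ x, B.indicator η x * h x ∂μ := by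
    refine integral_congr_ae ?_
    filter_upwards [hvan, hh'] with x hx hx'
    by_cases hxB : x ∈ B
    · rw [indicator_of_mem hxB]
    · rw [indicator_of_notMem hxB, zero_mul, hx']
      by_cases hux : u x = 0
      · rw [show h' x = 0 by by_contra h0; exact hxB ⟨hux, h0⟩, mul_zero]
      · rw [hx hux, zero_mul]
  have hgain := supportMeasure_sub_add_le (μ := μ) hu hh'm
  have hHolder := abs_integral_mul_le_lnorm_mul_lnorm hsr (hη.indicator hB) hh
  rw [supportMeasure_congr_ae (hh'.mono fun x hx => by simp only [hx] :
    (fun x => u x + h x) =ᵐ[μ] fun x => u x + h' x), hpair]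
  linarith [(abs_le.1 hHolder).2]

lemma inFSub_supportMeasure_of_le_abs [IsFiniteMeasure μ] (hsr : s.HolderConjugate r) {c : ℝ}
    (hc : 0 < c) {u η : X → ℝ} (hu : Measurable u) (hlb : ∀ x, u x ≠ 0 → c ≤ |u x|)
    (hη : MemLp η (ENNReal.ofReal r) μ) (hvan : ∀ᵐ x ∂μ, u x ≠ 0 → η x = 0) :
    InFSub μ s (supportMeasure μ) u η := by
  intro ε hε
  obtain ⟨δ', hδ', hsmall⟩ := exists_lnorm_indicator_le hsr.symm.lt.le hη (half_pos hε)
  obtain ⟨δ, hδ, hδt⟩ := exists_pos_rpow_div_le hsr.lt hc (half_pos hε) hδ' (Lnorm μ r η)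
  refine ⟨δ, hδ, fun h hh hpos hle => ?_⟩
  obtain ⟨B, hB, hest⟩ := exists_le_supportMeasure_add_sub hsr hc hu hlb hη hvan hh
  obtain ⟨hlost, hsum⟩ := hδt _ hpos hle
  rcases le_or_gt (μ.real B) δ' with hBδ | hBδ
  · have := mul_le_mul_of_nonneg_right (hsmall B hB hBδ) hpos.le
    linarith [measureReal_nonneg (μ := μ) (s := B)]
  · have hBη : Lnorm μ r (B.indicator η) ≤ Lnorm μ r η := lnorm_mono hsr.symm.pos hη fun x => by
      simpa only [Real.norm_eq_abs] using norm_indicator_le_norm_self (s := B) (f := η) (a := x)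
    have := mul_le_mul_of_nonneg_right hBη hpos.le
    nlinarith

/-- Testing with `± t · 1_S`, which does not change the support of `u` once `|t| < c`. -/
lemma integral_mul_indicator_eq_zero_of_inFSub [IsFiniteMeasure μ] (hs : 0 < s) {u η : X → ℝ}
    (hF : InFSub μ s (supportMeasure μ) u η) {c : ℝ} (hc : 0 < c) {S : Set X}
    (hS : MeasurableSet S) (hSu : S ⊆ {x | c ≤ |u x|}) :
    ∫ x, η x * S.indicator 1 x ∂μ = 0 := by
  rcases measureReal_nonneg.eq_or_lt with hS0 | hSpos
  · have h0 : S.indicator (1 : X → ℝ) =ᵐ[μ] 0 :=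
      indicator_meas_zero ((measureReal_eq_zero_iff).1 hS0.symm)
    have hzero : (fun x => η x * S.indicator 1 x) =ᵐ[μ] 0 := h0.mono fun x hx => by simp [hx]
    exact (integral_congr_ae hzero).trans (integral_zero _ _)
  set m := μ.real S ^ (1 / s)
  have hm : 0 < m := rpow_pos_of_pos hSpos _
  refine eq_zero_of_forall_mul_le_abs fun ε hε => ?_
  obtain ⟨δ, hδ, hFδ⟩ := hF (ε / m) (div_pos hε hm)
  refine ⟨min c (δ / m) / 2, by positivity, fun t ht htδ => ?_⟩
  have hnorm : Lnorm μ s (fun x => t * S.indicator 1 x) = |t| * m := by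
    rw [lnorm_const_mul hs, lnorm_indicator_one hs hS]
  have hsupp : supportMeasure μ (fun x => u x + t * S.indicator 1 x) = supportMeasure μ u := by
    simp only [supportMeasure]
    rw [support_add_const_mul_indicator hSu]
    linarith [min_le_left c (δ / m), min_le_right c (δ / m), div_pos hδ hm]
  have key : supportMeasure μ (fun x => u x + t * S.indicator 1 x) - supportMeasure μ u -
      ∫ x, η x * (t * S.indicator 1 x) ∂μ ≥ -(ε / m) * Lnorm μ s (fun x => t * S.indicator 1 x) :=
    hFδ _ ((memLp_indicator_const _ hS 1 (Or.inr (measure_ne_top μ S))).const_mul t)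
      (by rw [hnorm]; positivity)
      (by rw [hnorm]; nlinarith [min_le_right c (δ / m), abs_pos.2 ht, div_mul_cancel₀ δ hm.ne'])
  have hlin : ∫ x, η x * (t * S.indicator 1 x) ∂μ = (∫ x, η x * S.indicator 1 x ∂μ) * t := by
    rw [← integral_mul_const]
    congr 1
    ext x
    ring
  rw [hsupp, hnorm, hlin, sub_self, neg_mul, mul_comm |t|, ← mul_assoc, div_mul_cancel₀ ε hm.ne']
    at key
  linarith

lemma integral_mul_indicator_one {η : X → ℝ} {S : Set X} (hS : MeasurableSet S) :
    ∫ x, η x * S.indicator 1 x ∂μ = ∫ x in S, η x ∂μ := by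
  rw [← integral_indicator hS]
  congr 1
  ext x
  by_cases hx : x ∈ S <;> simp [hx]

lemma ae_eq_zero_of_integral_mul_indicator_eq_zero {u η : X → ℝ} (hu : Measurable u)
    (hη : Integrable η μ)
    (h : ∀ c > 0, ∀ S, MeasurableSet S → S ⊆ {x | c ≤ |u x|} →
      ∫ x, η x * S.indicator 1 x ∂μ = 0) :
    ∀ᵐ x ∂μ, u x ≠ 0 → η x = 0 := by
  have hlevel : ∀ k, ∀ᵐ x ∂μ, x ∈ truncationSet u k → η x = 0 := by
    intro k
    have hT := measurableSet_truncationSet hu k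
    refine (ae_restrict_iff' hT).1
      (hη.restrict.ae_eq_zero_of_forall_setIntegral_eq_zero fun S hS _ => ?_)
    rw [Measure.restrict_restrict hS, ← integral_mul_indicator_one (hS.inter hT)]
    exact h _ Nat.one_div_pos_of_nat _ (hS.inter hT) inter_subset_right
  filter_upwards [ae_all_iff.2 hlevel] with x hx hux
  obtain ⟨k, hk⟩ := (eventually_mem_truncationSet hux).exists
  exact hx k hk

lemma ae_eq_zero_of_inFSub [IsFiniteMeasure μ] (hs : 0 < s) {u η : X → ℝ} (hu : Measurable u)
    (hη : Integrable η μ) (hF : InFSub μ s (supportMeasure μ) u η) :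
    ∀ᵐ x ∂μ, u x ≠ 0 → η x = 0 :=
  ae_eq_zero_of_integral_mul_indicator_eq_zero hu hη fun _ hc _ hS hSu =>
    integral_mul_indicator_eq_zero_of_inFSub hs hF hc hS hSu

lemma abs_integral_mul_indicator_le [IsFiniteMeasure μ] (hs : 0 < s) {η v : X → ℝ} {C : ℝ}
    (hC : ∀ h, MemLp h (ENNReal.ofReal s) μ → |∫ x, η x * h x ∂μ| ≤ C * Lnorm μ s h)
    (hv : Measurable v) (hvan : ∀ᵐ x ∂μ, v x ≠ 0 → η x = 0) {S : Set X} (hS : MeasurableSet S) :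
    |∫ x, η x * S.indicator 1 x ∂μ| ≤ C * μ.real (S ∩ {x | v x = 0}) ^ (1 / s) := by
  have hZ : MeasurableSet (S ∩ {x | v x = 0}) := hS.inter (hv (measurableSet_singleton 0))
  have hsplit : (fun x => η x * S.indicator 1 x) =ᵐ[μ]
      fun x => η x * (S ∩ {x | v x = 0}).indicator 1 x := by
    filter_upwards [hvan] with x hx
    by_cases hvx : v x = 0
    · by_cases hxS : x ∈ S <;> simp [hxS, hvx]
    · simp [hx hvx]
  rw [integral_congr_ae hsplit, ← lnorm_indicator_one hs hZ]
  exact hC _ (memLp_indicator_const _ hZ 1 (Or.inr (measure_ne_top μ _)))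

lemma ae_eq_zero_of_inLimSub [IsFiniteMeasure μ] (hsr : s.HolderConjugate r) {ubar η : X → ℝ}
    (hubar : Measurable ubar) (hubar' : MemLp ubar (ENNReal.ofReal s) μ) (hη : Integrable η μ)
    (hlim : InLimSub μ s r (supportMeasure μ) ubar η) :
    ∀ᵐ x ∂μ, ubar x ≠ 0 → η x = 0 := by
  obtain ⟨u, ηs, hu, hconv, -, hηs, hF, hweak⟩ := hlim
  obtain ⟨C, hC0, hC⟩ := exists_abs_integral_mul_le_of_tendsto hsr hηs fun h hh => ⟨_, hweak h hh⟩
  choose v hv huv using fun k => (hu k).1.aemeasurable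
  have hvan : ∀ k, ∀ᵐ x ∂μ, v k x ≠ 0 → ηs k x = 0 := fun k =>
    ae_eq_zero_of_inFSub hsr.pos (hv k)
      ((hηs k).integrable (ENNReal.one_le_ofReal.2 hsr.symm.lt.le))
      ((inFSub_supportMeasure_congr (huv k)).1 (hF k))
  have hvconv : Tendsto (fun k => Lnorm μ s (fun x => v k x - ubar x)) atTop (𝓝 0) :=
    hconv.congr fun k => lnorm_congr_ae ((huv k).mono fun x hx => by simp only [hx])
  refine ae_eq_zero_of_integral_mul_indicator_eq_zero hubar hη fun c hc S hS hSu => ?_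
  have hmeas : Tendsto (fun k => μ.real {x | c ≤ |v k x - ubar x|}) atTop (𝓝 0) :=
    tendsto_measureReal_le_abs_of_tendsto_lnorm hsr.pos hc
      (fun k => ((hu k).ae_eq (huv k)).sub hubar') hvconv
  have hbound : Tendsto (fun k => C * μ.real {x | c ≤ |v k x - ubar x|} ^ (1 / s)) atTop (𝓝 0) := by
    simpa [zero_rpow (inv_ne_zero hsr.pos.ne')] using
      (hmeas.rpow_const (Or.inr (one_div_pos.2 hsr.pos).le)).const_mul C
  refine tendsto_nhds_unique
    (hweak _ (memLp_indicator_const _ hS 1 (Or.inr (measure_ne_top μ S))))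
    (squeeze_zero_norm (fun k => ?_) hbound)
  rw [Real.norm_eq_abs]
  refine (abs_integral_mul_indicator_le hsr.pos (hC k) (hv k) (hvan k) hS).trans ?_
  refine mul_le_mul_of_nonneg_left (rpow_le_rpow measureReal_nonneg (measureReal_mono ?_)
    (one_div_pos.2 hsr.pos).le) hC0
  intro x ⟨hxS, hx0⟩
  simpa [show v k x = 0 from hx0] using hSu hxS

lemma tendsto_lnorm_truncation_sub (hs : 0 < s) {u : X → ℝ} (hu : Measurable u)
    (hu' : MemLp u (ENNReal.ofReal s) μ) :
    Tendsto (fun k => Lnorm μ s (fun x => truncation u k x - u x)) atTop (𝓝 0) := by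
  have hint : Tendsto (fun k => ∫ x, |truncation u k x - u x| ^ s ∂μ) atTop (𝓝 0) := by
    refine integral_zero (α := X) (G := ℝ) (μ := μ) ▸
      tendsto_integral_of_dominated_convergence (fun x => |u x| ^ s)
        (fun k => (((measurable_truncation hu k).sub hu).abs.pow_const s).aestronglyMeasurable)
        (hu'.integrable_abs_rpow hs) (fun k => Eventually.of_forall fun x => ?_)
        (Eventually.of_forall fun x => ?_)
    · rw [Real.norm_eq_abs, abs_of_nonneg (rpow_nonneg (abs_nonneg _) _)]
      exact rpow_le_rpow (abs_nonneg _) (abs_truncation_sub_le k x) hs.le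
    · refine tendsto_const_nhds.congr' ?_
      filter_upwards [eventually_truncation_eq u x] with k hk
      rw [hk, sub_self, abs_zero, zero_rpow hs.ne']
  simpa [Lnorm, zero_rpow (inv_ne_zero hs.ne')] using
    hint.rpow_const (Or.inr (one_div_pos.2 hs).le)

lemma tendsto_supportMeasure_truncation [IsFiniteMeasure μ] (u : X → ℝ) :
    Tendsto (fun k => supportMeasure μ (truncation u k)) atTop (𝓝 (supportMeasure μ u)) := by
  simp only [supportMeasure, support_truncation]
  rw [← iUnion_truncationSet u]
  exact (ENNReal.tendsto_toReal (measure_ne_top _ _)).comp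
    (tendsto_measure_iUnion_atTop (monotone_truncationSet u))

lemma inLimSub_of_ae_eq_zero [IsFiniteMeasure μ] (hsr : s.HolderConjugate r) {ubar η : X → ℝ}
    (hubar : Measurable ubar) (hubar' : MemLp ubar (ENNReal.ofReal s) μ)
    (hη : MemLp η (ENNReal.ofReal r) μ) (hvan : ∀ᵐ x ∂μ, ubar x ≠ 0 → η x = 0) :
    InLimSub μ s r (supportMeasure μ) ubar η := by
  refine ⟨truncation ubar, fun _ => η,
    fun k => hubar'.indicator (measurableSet_truncationSet hubar k),
    tendsto_lnorm_truncation_sub hsr.pos hubar hubar', tendsto_supportMeasure_truncation ubar,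
    fun _ => hη, fun k => ?_, fun _ _ => tendsto_const_nhds⟩
  refine inFSub_supportMeasure_of_le_abs hsr (Nat.one_div_pos_of_nat (n := k))
    (measurable_truncation hubar k) (fun x hx => le_abs_truncation hx) hη ?_
  filter_upwards [hvan] with x hx hxk
  exact hx fun h0 => hxk (indicator_apply_eq_zero.2 fun _ => h0)

end Subdifferential

theorem limsub_qs0_characterization_general (d : ℕ) (Ω : Set (Fin d → ℝ))
    (hfin : volume Ω < ⊤) (s r : ℝ) (hs : 1 < s)
    (hr : 1 / s + 1 / r = 1)
    (ubar : (Fin d → ℝ) → ℝ) (hubar : MemLp ubar (ENNReal.ofReal s) (volume.restrict Ω)) :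
    ∀ η : (Fin d → ℝ) → ℝ,
      (MemLp η (ENNReal.ofReal r) (volume.restrict Ω) ∧
        InLimSub (volume.restrict Ω) s r
          (fun u => ((volume.restrict Ω) {x | u x ≠ 0}).toReal) ubar η) ↔
      (MemLp η (ENNReal.ofReal r) (volume.restrict Ω) ∧
        ∀ᵐ x ∂(volume.restrict Ω), ubar x ≠ 0 → η x = 0) := by
  intro η
  have : IsFiniteMeasure (volume.restrict Ω) := ⟨by rwa [Measure.restrict_apply_univ]⟩
  have hsr : s.HolderConjugate r := Real.holderConjugate_iff.2 ⟨hs, by simpa [one_div] using hr⟩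
  obtain ⟨v, hv, hubarv⟩ := hubar.1.aemeasurable
  have hv' := hubar.ae_eq hubarv
  have hsupp : (∀ᵐ x ∂(volume.restrict Ω), ubar x ≠ 0 → η x = 0) ↔
      ∀ᵐ x ∂(volume.restrict Ω), v x ≠ 0 → η x = 0 :=
    eventually_congr (hubarv.mono fun x hx => by rw [hx])
  refine and_congr_right fun hη => ((inLimSub_supportMeasure_congr hubarv).trans
    ⟨ae_eq_zero_of_inLimSub hsr hv hv' (hη.integrable (ENNReal.one_le_ofReal.2 hsr.symm.lt.le)),
      inLimSub_of_ae_eq_zero hsr hv hv' hη⟩).trans hsupp.symm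

/-- For `s ∈ (1,∞)`, the limiting subdifferential of `q_{s,0}(u) = λ({u ≠ 0})` at any
`ubar ∈ L^s(Ω)` equals `{η ∈ L^r : η = 0 a.e. on {ubar ≠ 0}}`. -/
theorem limsub_qs0_characterization (d : ℕ) (Ω : Set (Fin d → ℝ)) (hΩ : MeasurableSet Ω)
    (h0 : 0 < volume Ω) (hfin : volume Ω < ⊤) (s r : ℝ) (hs : 1 < s)
    (hr : 1 / s + 1 / r = 1)
    (ubar : (Fin d → ℝ) → ℝ) (hubar : MemLp ubar (ENNReal.ofReal s) (volume.restrict Ω)) :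
    ∀ η : (Fin d → ℝ) → ℝ,
      (MemLp η (ENNReal.ofReal r) (volume.restrict Ω) ∧
        InLimSub (volume.restrict Ω) s r
          (fun u => ((volume.restrict Ω) {x | u x ≠ 0}).toReal) ubar η) ↔
      (MemLp η (ENNReal.ofReal r) (volume.restrict Ω) ∧
        ∀ᵐ x ∂(volume.restrict Ω), ubar x ≠ 0 → η x = 0) :=
  limsub_qs0_characterization_general d Ω hfin s r hs hr ubar hubar
end
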